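/- Commutation with a fixed generator of a free colored Milnor group is detected after killing all other generators of the same color. Precisely: fix a color c : ι with r c = s + 1, let CMF = F/X be the free colored Milnor group on generators x_{ij} (i : ι, j : Fin (r i)), and let CMF' be the free colored Milnor group obtained by deleting all generators x_{c,j} of color c except x_{c,0} (i.e., with r c replaced by 1). Let q : CMF → CMF' be the surjection sending x_{c,j} to 1 for j ≠ 0 and every other generator to the corresponding generator. Then for every l ∈ CMF: [x_{c,0}, l] = 1 in CMF if and only if [q(x_{c,0}), q(l)] = 1 in CMF'. -/

import Mathlib

open scoped commutatorElement

/-- The Milnor relations: the normal closure in the free group on generators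
`x_{ij}` (indexed by `(i, j) : Σ i : ι, Fin (r i)`, where `i` is the color) of all
commutators of two conjugates of generators of the same color. -/
def milnorRels (ι : Type*) (r : ι → ℕ) : Subgroup (FreeGroup (Σ i : ι, Fin (r i))) :=
  Subgroup.normalClosure
    {w | ∃ (i : ι) (j k : Fin (r i)) (g₁ g₂ : FreeGroup (Σ i : ι, Fin (r i))),
      w = ⁅g₁ * FreeGroup.of ⟨i, j⟩ * g₁⁻¹, g₂ * FreeGroup.of ⟨i, k⟩ * g₂⁻¹⁆}

instance (ι : Type*) (r : ι → ℕ) : (milnorRels ι r).Normal :=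
  Subgroup.normalClosure_normal

/-- The free colored Milnor group `CMF = F/X`. -/
abbrev CMF (ι : Type*) (r : ι → ℕ) : Type _ :=
  FreeGroup (Σ i : ι, Fin (r i)) ⧸ milnorRels ι r

/-- The class of the generator `x_{ij}` in `CMF`. -/
def xg (ι : Type*) (r : ι → ℕ) (i : ι) (j : Fin (r i)) : CMF ι r :=
  QuotientGroup.mk (FreeGroup.of ⟨i, j⟩)

/-! Write `x₀ = x_{c,0}` and `N` for the normal closure of the generators of color `c`. The Milnor
relations make `x₀` commute with every conjugate of a generator of its own color, so `x₀`
centralizes `N`. The homomorphism `p : CMF' → CMF` fixing `x₀` and every generator of another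
color satisfies `p (q l) ≡ l` modulo `N`. Hence if `q x₀` commutes with `q l`, then
`x₀ = p (q x₀)` commutes with `p (q l)`, and therefore with `l`. -/

theorem commutatorElement_eq_one_iff_map_of_section {G H : Type*} [Group G] [Group H]
    (q : G →* H) (p : H →* G) {x : G} (hx : p (q x) = x)
    (hpq : ∀ g, Commute x ((p (q g))⁻¹ * g)) (g : G) :
    ⁅x, g⁆ = 1 ↔ ⁅q x, q g⁆ = 1 := by
  refine ⟨fun h => by rw [← map_commutatorElement, h, map_one], fun h => ?_⟩
  have hxpq : Commute x (p (q g)) := by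
    rw [← commutatorElement_eq_one_iff_commute, ← hx, ← map_commutatorElement,
      h, map_one]
  rw [commutatorElement_eq_one_iff_commute]
  simpa using hxpq.mul_right (hpq g)

namespace CMF

variable {ι : Type*} {r : ι → ℕ}

theorem commute_conj_xg (i : ι) (j k : Fin (r i)) (a b : CMF ι r) :
    Commute (a * xg ι r i j * a⁻¹) (b * xg ι r i k * b⁻¹) := by
  obtain ⟨g₁, rfl⟩ := QuotientGroup.mk_surjective a
  obtain ⟨g₂, rfl⟩ := QuotientGroup.mk_surjective b
  rw [← commutatorElement_eq_one_iff_commute]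
  exact (QuotientGroup.eq_one_iff _).mpr
    (Subgroup.subset_normalClosure ⟨i, j, k, g₁, g₂, rfl⟩)

theorem hom_ext {G : Type*} [Group G] {f g : CMF ι r →* G}
    (h : ∀ i j, f (xg ι r i j) = g (xg ι r i j)) : f = g :=
  QuotientGroup.monoidHom_ext _ <| FreeGroup.ext_hom _ _ fun ⟨i, j⟩ => h i j

section Lift

variable {G : Type*} [Group G] (f : (Σ i : ι, Fin (r i)) → G)
  (hf : ∀ i (j k : Fin (r i)) (a b : G), Commute (a * f ⟨i, j⟩ * a⁻¹) (b * f ⟨i, k⟩ * b⁻¹))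

def lift : CMF ι r →* G :=
  QuotientGroup.lift _ (FreeGroup.lift f) <| show milnorRels ι r ≤ _ from
    Subgroup.normalClosure_le_normal <| by
      rintro _ ⟨i, j, k, g₁, g₂, rfl⟩
      simpa [← commutatorElement_eq_one_iff_commute] using
        hf i j k (FreeGroup.lift f g₁) (FreeGroup.lift f g₂)

@[simp]
theorem lift_xg (i : ι) (j : Fin (r i)) : lift f hf (xg ι r i j) = f ⟨i, j⟩ := by
  rw [lift, xg, QuotientGroup.lift_mk', FreeGroup.lift_apply_of]

end Lift

theorem commute_xg_of_mem_normalClosure (c : ι) (j : Fin (r c)) {n : CMF ι r}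
    (hn : n ∈ Subgroup.normalClosure (Set.range (xg ι r c))) : Commute (xg ι r c j) n := by
  suffices Subgroup.normalClosure (Set.range (xg ι r c)) ≤ Subgroup.centralizer {xg ι r c j} from
    (Subgroup.mem_centralizer_singleton_iff.mp (this hn)).symm
  refine (Subgroup.closure_le _).mpr fun y hy => ?_
  obtain ⟨_, ⟨k, rfl⟩, hconj⟩ := Group.mem_conjugatesOfSet_iff.mp hy
  obtain ⟨a, rfl⟩ := isConj_iff.mp hconj
  rw [SetLike.mem_coe, Subgroup.mem_centralizer_singleton_iff]
  simpa using (commute_conj_xg c k j a 1).eq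

section KillColor

variable [DecidableEq ι] (c : ι) (hc : 0 < r c)

def includeFirst : CMF ι (Function.update r c 1) →* CMF ι r :=
  lift
    (fun p => if h : p.1 = c then xg ι r c ⟨0, hc⟩
      else xg ι r p.1 (Fin.cast (Function.update_of_ne h 1 r) p.2))
    (by
      intro i j k a b
      by_cases h : i = c
      · subst h
        simpa only [dif_pos] using commute_conj_xg i _ _ a b
      · simpa only [dif_neg h] using commute_conj_xg i _ _ a b)

@[simp]
theorem includeFirst_xg_self (j : Fin (Function.update r c 1 c)) :
    includeFirst c hc (xg ι (Function.update r c 1) c j) = xg ι r c ⟨0, hc⟩ := by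
  simp [includeFirst]

@[simp]
theorem includeFirst_xg_of_ne {i : ι} (hi : i ≠ c) (j : Fin (Function.update r c 1 i)) :
    includeFirst c hc (xg ι (Function.update r c 1) i j) =
      xg ι r i (Fin.cast (Function.update_of_ne hi 1 r) j) := by
  simp [includeFirst, hi]

theorem inv_includeFirst_mul_mem_normalClosure (q : CMF ι r →* CMF ι (Function.update r c 1))
    (hq0 : q (xg ι r c ⟨0, hc⟩) = xg ι (Function.update r c 1) c ⟨0, by simp⟩)
    (hqne : ∀ j : Fin (r c), (j : ℕ) ≠ 0 → q (xg ι r c j) = 1)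
    (hqother : ∀ (i : ι) (hi : i ≠ c) (j : Fin (r i)),
      q (xg ι r i j) =
        xg ι (Function.update r c 1) i (Fin.cast (Function.update_of_ne hi 1 r).symm j))
    (l : CMF ι r) :
    (includeFirst c hc (q l))⁻¹ * l ∈ Subgroup.normalClosure (Set.range (xg ι r c)) := by
  set N := Subgroup.normalClosure (Set.range (xg ι r c))
  have hxN : ∀ j, (xg ι r c j : CMF ι r ⧸ N) = 1 := fun j =>
    (QuotientGroup.eq_one_iff _).mpr (Subgroup.subset_normalClosure (Set.mem_range_self j))
  suffices (QuotientGroup.mk' N).comp ((includeFirst c hc).comp q) = QuotientGroup.mk' N from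
    QuotientGroup.eq.mp (DFunLike.congr_fun this l)
  refine hom_ext fun i j => ?_
  simp only [MonoidHom.comp_apply, QuotientGroup.mk'_apply]
  by_cases hi : i = c
  · subst hi
    by_cases hj : (j : ℕ) = 0
    · obtain rfl : j = ⟨0, hc⟩ := Fin.ext hj
      simp [hq0, hxN]
    · simp [hqne j hj, hxN]
  · simp [hqother i hi, includeFirst_xg_of_ne c hc hi]

end KillColor

end CMF

theorem commutes_iff_commutes_after_killing_general (ι : Type*) [DecidableEq ι]
    (r : ι → ℕ) (c : ι) (s : ℕ) (hc : r c = s + 1)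
    (q : CMF ι r →* CMF ι (Function.update r c 1))
    (hq0 : q (xg ι r c (Fin.cast hc.symm 0)) =
      xg ι (Function.update r c 1) c (Fin.cast (Function.update_self c 1 r).symm 0))
    (hqne : ∀ j : Fin (r c), (j : ℕ) ≠ 0 → q (xg ι r c j) = 1)
    (hqother : ∀ (i : ι) (hi : i ≠ c) (j : Fin (r i)),
      q (xg ι r i j) =
        xg ι (Function.update r c 1) i (Fin.cast (Function.update_of_ne hi 1 r).symm j)) :
    ∀ l : CMF ι r,
      ⁅xg ι r c (Fin.cast hc.symm 0), l⁆ = 1 ↔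
        ⁅q (xg ι r c (Fin.cast hc.symm 0)), q l⁆ = 1 := by
  have hc0 : 0 < r c := hc ▸ s.succ_pos
  refine commutatorElement_eq_one_iff_map_of_section q (CMF.includeFirst c hc0) ?_ fun l =>
    CMF.commute_xg_of_mem_normalClosure c _
      (CMF.inv_includeFirst_mul_mem_normalClosure c hc0 q hq0 hqne hqother l)
  rw [hq0, CMF.includeFirst_xg_self]
  rfl

/-- commutation with the generator `x_{c,0}` of the free colored Milnor
group is detected after killing all the other generators of color `c`: if
`q : CMF → CMF'` is the surjection onto the free colored Milnor group with `r c`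
replaced by `1`, sending `x_{c,j}` to `1` for `j ≠ 0` and every other generator to
the corresponding generator, then for all `l`, `[x_{c,0}, l] = 1` in `CMF` if and
only if `[q x_{c,0}, q l] = 1` in `CMF'`. -/
theorem commutes_iff_commutes_after_killing (ι : Type*) [Fintype ι] [DecidableEq ι]
    (r : ι → ℕ) (c : ι) (s : ℕ) (hc : r c = s + 1)
    (q : CMF ι r →* CMF ι (Function.update r c 1))
    (hq0 : q (xg ι r c (Fin.cast hc.symm 0)) =
      xg ι (Function.update r c 1) c (Fin.cast (Function.update_self c 1 r).symm 0))
    (hqne : ∀ j : Fin (r c), (j : ℕ) ≠ 0 → q (xg ι r c j) = 1)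
    (hqother : ∀ (i : ι) (hi : i ≠ c) (j : Fin (r i)),
      q (xg ι r i j) =
        xg ι (Function.update r c 1) i (Fin.cast (Function.update_of_ne hi 1 r).symm j)) :
    ∀ l : CMF ι r,
      ⁅xg ι r c (Fin.cast hc.symm 0), l⁆ = 1 ↔
        ⁅q (xg ι r c (Fin.cast hc.symm 0)), q l⁆ = 1 :=
  commutes_iff_commutes_after_killing_general ι r c s hc q hq0 hqne hqother
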